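/- arXiv:0804.2804 — 5 statements merged into one kernel-verified Lean document; each statement's English description precedes it below -/
import Mathlib

section
/- On an almost complex manifold with Norden metric, (∇_X F)(Y,JZ,U) + (∇_X F)(Y,Z,JU) = -g((∇_X J)Z,(∇_Y J)U) - g((∇_X J)U,(∇_Y J)Z). -/
/- Algebraic model of an almost complex manifold with Norden metric:
`A` is the ring of smooth functions, `V` the `A`-module of vector fields,
`g` the (Norden) metric, `J` the almost complex structure, `nabla` the
Levi-Civita connection, `act X f` the derivative of the function `f` in the
direction of the vector field `X`, and `lb` the Lie bracket of vector fields. -/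

variable {A V : Type*} [CommRing A] [Algebra ℝ A] [AddCommGroup V] [Module A V]

/-- `(∇_X J) Y`. -/
def covJ (nabla : V → V → V) (J : V → V) (X Y : V) : V :=
  nabla X (J Y) - J (nabla X Y)

/-- The fundamental tensor `F(X,Y,Z) = g((∇_X J)Y, Z)`. -/
def Ften (g : V → V → A) (nabla : V → V → V) (J : V → V) (X Y Z : V) : A :=
  g (covJ nabla J X Y) Z

/-- The curvature `R(X,Y)Z = ∇_X ∇_Y Z - ∇_Y ∇_X Z - ∇_{[X,Y]} Z`. -/
def curv (nabla : V → V → V) (lb : V → V → V) (X Y Z : V) : V :=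
  nabla X (nabla Y Z) - nabla Y (nabla X Z) - nabla (lb X Y) Z

/-- The `(0,4)` curvature tensor `R(X,Y,Z,U) = g(R(X,Y)Z, U)`. -/
def curv4 (g : V → V → A) (nabla lb : V → V → V) (X Y Z U : V) : A :=
  g (curv nabla lb X Y Z) U

/-- The covariant derivative `(∇_X F)(Y,Z,U)` of the `(0,3)`-tensor `F`. -/
def covF (g : V → V → A) (nabla : V → V → V) (J : V → V) (act : V → A → A)
    (X Y Z U : V) : A :=
  act X (Ften g nabla J Y Z U) - Ften g nabla J (nabla X Y) Z U
    - Ften g nabla J Y (nabla X Z) U - Ften g nabla J Y Z (nabla X U)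

/-- On an almost complex manifold with Norden metric, `(∇_X F)(Y,JZ,U) + (∇_X F)(Y,Z,JU) = -g((∇_X J)Z,(∇_Y J)U) - g((∇_X J)U,(∇_Y J)Z)`. -/
theorem covF_hybrid_identity
    (g : V → V → A) (J : V → V) (nabla : V → V → V)
    (act : V → A → A) (lb : V → V → V)
    (g_symm : ∀ x y, g x y = g y x)
    (g_addl : ∀ x y z, g (x + y) z = g x z + g y z)
    (g_smull : ∀ (a : A) (x y : V), g (a • x) y = a * g x y)
    (J_add : ∀ x y, J (x + y) = J x + J y)
    (J_smul : ∀ (a : A) (x : V), J (a • x) = a • J x)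
    (J_sq : ∀ x, J (J x) = -x)
    (norden : ∀ x y, g (J x) (J y) = -(g x y))
    (act_add : ∀ X (a b : A), act X (a + b) = act X a + act X b)
    (act_mul : ∀ X (a b : A), act X (a * b) = act X a * b + a * act X b)
    (nabla_addl : ∀ X Y Z, nabla (X + Y) Z = nabla X Z + nabla Y Z)
    (nabla_smull : ∀ (a : A) (X Y : V), nabla (a • X) Y = a • nabla X Y)
    (nabla_addr : ∀ X Y Z, nabla X (Y + Z) = nabla X Y + nabla X Z)
    (nabla_leib : ∀ X (a : A) (Y : V), nabla X (a • Y) = act X a • Y + a • nabla X Y)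
    (compat : ∀ X Y Z, act X (g Y Z) = g (nabla X Y) Z + g Y (nabla X Z))
    (torsion_free : ∀ X Y, nabla X Y - nabla Y X = lb X Y)
    (act_lb : ∀ X Y (a : A), act (lb X Y) a = act X (act Y a) - act Y (act X a))
    : ∀ X Y Z U, covF g nabla J act X Y (J Z) U + covF g nabla J act X Y Z (J U) = -(g (covJ nabla J X Z) (covJ nabla J Y U)) - g (covJ nabla J X U) (covJ nabla J Y Z) := by
  intro X Y Z U
  have g_negl : ∀ x y, g (-x) y = -(g x y) := by
    intro x y
    have := g_smull (-1) x y
    simpa using this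
  have g_negr : ∀ x y, g x (-y) = -(g x y) := by
    intro x y
    rw [g_symm, g_negl, g_symm]
  have g_addr : ∀ x y z, g x (y + z) = g x y + g x z := by
    intro x y z
    rw [g_symm, g_addl, g_symm y x, g_symm z x]
  have J_neg : ∀ x, J (-x) = -(J x) := by
    intro x
    have := J_smul (-1) x
    simpa using this
  have J_sub : ∀ x y, J (x - y) = J x - J y := by
    intro x y
    rw [sub_eq_add_neg, J_add, J_neg, sub_eq_add_neg]
  have act0 : ∀ X, act X (0 : A) = 0 := by
    intro X
    have h := act_add X 0 0
    rw [add_zero] at h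
    linear_combination -h
  have act1 : ∀ X, act X (1 : A) = 0 := by
    intro X
    have h := act_mul X 1 1
    rw [one_mul, mul_one] at h
    linear_combination -h
  have act_neg : ∀ X (a : A), act X (-a) = -(act X a) := by
    intro X a
    have h := act_add X (-a) a
    rw [neg_add_cancel] at h
    linear_combination act0 X - h
  have actm1 : ∀ X, act X (-1 : A) = 0 := by
    intro X
    rw [act_neg, act1, neg_zero]
  have nabla_negr : ∀ X Y, nabla X (-Y) = -(nabla X Y) := by
    intro X Y
    have h := nabla_leib X (-1) Y
    rw [actm1, zero_smul, zero_add, neg_one_smul, neg_one_smul] at h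
    exact h
  have h2 : ∀ a b, g (J a) b = g a (J b) := by
    intro a b
    have h := norden (J a) b
    rw [J_sq, g_negl] at h
    linear_combination h
  have hP : ∀ Y Z, covJ nabla J Y (J Z) = -(J (covJ nabla J Y Z)) := by
    intro Y Z
    simp only [covJ, J_sq, nabla_negr, J_sub, J_sq]
    abel
  have Padd : ∀ Y a b, covJ nabla J Y (a + b) = covJ nabla J Y a + covJ nabla J Y b := by
    intro Y a b
    simp only [covJ, J_add, nabla_addr]
    abel
  have hdec : ∀ X Z, nabla X (J Z) = covJ nabla J X Z + J (nabla X Z) := by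
    intro X Z
    simp [covJ]
  have g_subl : ∀ x y z, g (x - y) z = g x z - g y z := by
    intro x y z
    rw [sub_eq_add_neg, g_addl, g_negl, sub_eq_add_neg]
  have g_subr : ∀ x y z, g x (y - z) = g x y - g x z := by
    intro x y z
    rw [g_symm, g_subl, g_symm y x, g_symm z x]
  have hF : ∀ Y W U, g (covJ nabla J Y W) U = g W (covJ nabla J Y U) := by
    intro Y W U
    have c1 := compat Y (J W) U
    have c2 := compat Y W (J U)
    rw [h2 W U, h2 W (nabla Y U)] at c1
    simp only [covJ, g_subl, g_subr, h2 (nabla Y W) U]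
    linear_combination c2 - c1
  have e1 : ∀ Y' Z' U', Ften g nabla J Y' (J Z') U' = -(g (covJ nabla J Y' Z') (J U')) := by
    intro Y' Z' U'
    rw [Ften, hP, g_negl, h2]
  have e2 : Ften g nabla J Y (nabla X (J Z)) U
      = g (covJ nabla J Y (covJ nabla J X Z)) U - g (covJ nabla J Y (nabla X Z)) (J U) := by
    rw [hdec, Ften, Padd, g_addl, hP, g_negl, h2]
    ring
  have e3 : g (covJ nabla J Y Z) (nabla X (J U))
      = g (covJ nabla J Y Z) (covJ nabla J X U) + g (covJ nabla J Y Z) (J (nabla X U)) := by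
    rw [hdec, g_addr]
  have k1 := hF Y (covJ nabla J X Z) U
  have k2 := g_symm (covJ nabla J Y Z) (covJ nabla J X U)
  simp only [covF]
  rw [e1 Y Z U, e1 (nabla X Y) Z U, e2, e1 Y Z (nabla X U)]
  simp only [Ften]
  rw [e3, act_neg]
  linear_combination -k1 - k2
end

section
/- If on a W₃-manifold g((∇_x J)x,(∇_x J)x)=0 for every tangent vector x at every point, then the square norm ‖∇J‖² = g^{ij}g^{kl} g((∇_{e_i}J)e_k,(∇_{e_j}J)e_l) vanishes, i.e., the manifold is isotropic Kähler. -/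
/-!
Write `eⁱ = gⁱᵏ bₖ` for the dual frame, `S = g(B(bᵢ, bₖ), B(eⁱ, eᵏ)) = ‖∇J‖²` and
`C = g(B(bᵢ, bₖ), B(eᵏ, eⁱ))`. Since every `B x = ∇ₓJ` anticommutes with `J`, it is traceless, and
the W₃ condition contracted once then gives `B(bᵢ, eⁱ) = 0`. Polarizing the quartic
`x ↦ g(B(x, x), B(x, x))` and writing `P(x, y) = B(x, y) + B(y, x)` gives
`g(P(x, y), P(z, u)) + g(P(x, u), P(z, y)) + g(P(x, z), P(y, u)) = 0`. Contracting it in `(x, z)` and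
`(y, u)`, the last term vanishes and the first two both equal `2(S + C)`, so `S + C = 0`.
Contracting the W₃ condition against `(bᵢ, bₖ, B(eⁱ, eᵏ))` gives `S + 2C = 0` instead, hence `S = 0`.
-/

open Finset Module

section DualFrame

variable {R V W ι : Type*} [CommRing R] [AddCommGroup V] [Module R V] [AddCommGroup W]
  [Module R W] [Fintype ι] {g : V →ₗ[R] V →ₗ[R] R} {b : Basis ι R V} {ginv : ι → ι → R}

noncomputable def dualFrame (b : Basis ι R V) (ginv : ι → ι → R) (i : ι) : V :=
  ∑ k, ginv i k • b k

variable [DecidableEq ι]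

def IsGramInverse (g : V →ₗ[R] V →ₗ[R] R) (b : Basis ι R V) (ginv : ι → ι → R) : Prop :=
  ∀ i j, ∑ k, ginv i k * g (b k) (b j) = if i = j then 1 else 0

lemma dualFrame_apply_basis (hginv : IsGramInverse g b ginv) (i j : ι) :
    g (dualFrame b ginv i) (b j) = if i = j then 1 else 0 := by
  simp [dualFrame, ← hginv i j]

lemma apply_dualFrame_eq_coord (hginv : IsGramInverse g b ginv) (i : ι) :
    g (dualFrame b ginv i) = b.coord i :=
  b.ext fun j => by simp [dualFrame_apply_basis hginv, Finsupp.single_apply, eq_comm]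

lemma sum_apply_dualFrame_smul (hginv : IsGramInverse g b ginv) (v : V) :
    ∑ i, g (dualFrame b ginv i) v • b i = v := by
  simp [apply_dualFrame_eq_coord hginv, b.sum_repr]

lemma sum_apply_basis_mul_apply_dualFrame (hginv : IsGramInverse g b ginv) (u v : V) :
    ∑ i, g u (b i) * g (dualFrame b ginv i) v = g u v := by
  conv_rhs => rw [← sum_apply_dualFrame_smul hginv v]
  simp [mul_comm]

lemma IsGramInverse.separatingLeft (hginv : IsGramInverse g b ginv)
    (g_symm : ∀ x y, g x y = g y x) : g.SeparatingLeft := fun v hv => by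
  rw [← sum_apply_dualFrame_smul hginv v]
  simp [g_symm _ v, hv]

lemma IsGramInverse.comm (hginv : IsGramInverse g b ginv) (g_symm : ∀ x y, g x y = g y x)
    (i j : ι) : ginv i j = ginv j i := by
  have h (i j : ι) : g (dualFrame b ginv i) (dualFrame b ginv j) = ginv j i := by
    change g _ (∑ k, ginv j k • b k) = _
    simp [dualFrame_apply_basis hginv]
  rw [← h, g_symm, h]

lemma sum_apply_basis_dualFrame_comm (hginv : IsGramInverse g b ginv)
    (g_symm : ∀ x y, g x y = g y x) (β : V →ₗ[R] V →ₗ[R] W) :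
    ∑ i, β (b i) (dualFrame b ginv i) = ∑ i, β (dualFrame b ginv i) (b i) := by
  simp only [dualFrame, map_sum, map_smul, LinearMap.sum_apply, LinearMap.smul_apply]
  rw [sum_comm]
  simp_rw [hginv.comm g_symm]

lemma trace_eq_sum_apply_dualFrame (hginv : IsGramInverse g b ginv) (P : V →ₗ[R] V) :
    LinearMap.trace R V P = ∑ i, g (dualFrame b ginv i) (P (b i)) := by
  simp [LinearMap.trace_eq_matrix_trace R b, Matrix.trace, LinearMap.toMatrix_apply,
    apply_dualFrame_eq_coord hginv]

end DualFrame

lemma LinearMap.trace_eq_zero_of_anticomm {R V : Type*} [CommRing R] [IsAddTorsionFree R]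
    [AddCommGroup V] [Module R V] {P J : V →ₗ[R] V} (hJ : J * J = -1) (hPJ : P * J = -(J * P)) :
    trace R V P = 0 := by
  refine self_eq_neg.mp ?_
  calc trace R V P = -trace R V (P * J * J) := by simp [mul_assoc, hJ]
    _ = -trace R V (J * (P * J)) := by rw [trace_mul_comm]
    _ = -trace R V P := by simp [hPJ, ← mul_assoc, hJ]

section CommRing

variable {R V ι : Type*} [CommRing R] [AddCommGroup V] [Module R V] [Fintype ι]
  {g : V →ₗ[R] V →ₗ[R] R} {B : V →ₗ[R] V →ₗ[R] V} {J : V →ₗ[R] V}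
  {b : Basis ι R V} {ginv : ι → ι → R}

lemma apply_apply_J_eq_neg (hg : g.SeparatingLeft) (J_sq : ∀ x, J (J x) = -x)
    (norden : ∀ x y, g (J x) (J y) = -(g x y))
    (F_hybrid : ∀ x y z, g (B x y) z = g (B x (J y)) (J z)) (x y : V) :
    B x (J y) = -J (B x y) := by
  have hJ (u w : V) : g (J u) w = g u (J w) := by simpa [J_sq] using norden u (J w)
  refine eq_neg_of_add_eq_zero_left (hg _ fun w => ?_)
  have h := F_hybrid x y (-J w)
  simp only [map_neg, J_sq, neg_neg] at h
  simp only [map_add, LinearMap.add_apply, hJ]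
  linear_combination -h

lemma trace_apply_eq_zero [IsAddTorsionFree R] (hg : g.SeparatingLeft)
    (J_sq : ∀ x, J (J x) = -x) (norden : ∀ x y, g (J x) (J y) = -(g x y))
    (F_hybrid : ∀ x y z, g (B x y) z = g (B x (J y)) (J z)) (x : V) :
    LinearMap.trace R V (B x) = 0 :=
  LinearMap.trace_eq_zero_of_anticomm (J := J) (LinearMap.ext fun y => by simp [J_sq])
    (LinearMap.ext fun y => by simp [apply_apply_J_eq_neg hg J_sq norden F_hybrid])

noncomputable def squareNorm (g : V →ₗ[R] V →ₗ[R] R) (B : V →ₗ[R] V →ₗ[R] V)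
    (b : Basis ι R V) (ginv : ι → ι → R) : R :=
  ∑ i, ∑ k, g (B (b i) (b k)) (B (dualFrame b ginv i) (dualFrame b ginv k))

noncomputable def twistedSquareNorm (g : V →ₗ[R] V →ₗ[R] R) (B : V →ₗ[R] V →ₗ[R] V)
    (b : Basis ι R V) (ginv : ι → ι → R) : R :=
  ∑ i, ∑ k, g (B (b i) (b k)) (B (dualFrame b ginv k) (dualFrame b ginv i))

lemma sum_ginv_mul_ginv_eq_squareNorm :
    ∑ i, ∑ j, ∑ k, ∑ l, ginv i j * ginv k l * g (B (b i) (b k)) (B (b j) (b l))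
      = squareNorm g B b ginv := by
  simp only [squareNorm, dualFrame, map_sum, map_smul, LinearMap.sum_apply, LinearMap.smul_apply,
    smul_eq_mul, mul_sum]
  refine sum_congr rfl fun i _ => ?_
  rw [sum_comm]
  refine sum_congr rfl fun k _ => ?_
  rw [sum_comm]
  exact sum_congr rfl fun l _ => sum_congr rfl fun j _ => by ring

lemma squareNorm_add_two_mul_twistedSquareNorm_eq_zero [DecidableEq ι] (hginv : IsGramInverse g b ginv)
    (g_symm : ∀ x y, g x y = g y x) (F_symm : ∀ x y z, g (B x y) z = g (B x z) y)
    (W3 : ∀ x y z, g (B x y) z + g (B y z) x + g (B z x) y = 0) :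
    squareNorm g B b ginv + 2 * twistedSquareNorm g B b ginv = 0 := by
  unfold squareNorm
  set e := dualFrame b ginv
  have hW : ∑ i, ∑ k, (g (B (b i) (b k)) (B (e i) (e k)) + g (B (b k) (B (e i) (e k))) (b i)
      + g (B (B (e i) (e k)) (b i)) (b k)) = 0 :=
    sum_eq_zero fun i _ => sum_eq_zero fun k _ => W3 _ _ _
  have hX : ∑ i, ∑ k, g (B (b k) (B (e i) (e k))) (b i) = twistedSquareNorm g B b ginv := by
    simp_rw [F_symm (b _) (B _ _)]
    exact sum_comm
  have hE : ∑ i, ∑ k, g (B (B (e i) (e k)) (b i)) (b k) = twistedSquareNorm g B b ginv := by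
    have hexpand (i k : ι) : g (B (B (e i) (e k)) (b i)) (b k)
        = ∑ c, g (B (b c) (b i)) (b k) * g (e k) (B (e i) (e c)) := by
      conv_lhs => rw [← sum_apply_dualFrame_smul hginv (B (e i) (e k))]
      simp only [map_sum, map_smul, LinearMap.sum_apply, LinearMap.smul_apply, smul_eq_mul]
      refine sum_congr rfl fun c _ => ?_
      rw [g_symm (e c), F_symm, g_symm (B _ _), mul_comm]
    simp_rw [hexpand]
    refine (sum_congr rfl fun i _ => sum_comm).trans ?_
    simp_rw [e, sum_apply_basis_mul_apply_dualFrame hginv]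
    exact sum_comm
  simp only [sum_add_distrib, hX, hE] at hW
  linear_combination hW

end CommRing

section Field

variable {K V ι : Type*} [Field K] [CharZero K] [AddCommGroup V] [Module K V] [Fintype ι]
  [DecidableEq ι] {g : V →ₗ[K] V →ₗ[K] K} {B : V →ₗ[K] V →ₗ[K] V}
  {b : Basis ι K V} {ginv : ι → ι → K}

lemma sum_apply_basis_dualFrame_eq_zero (hginv : IsGramInverse g b ginv)
    (g_symm : ∀ x y, g x y = g y x) (F_symm : ∀ x y z, g (B x y) z = g (B x z) y)
    (W3 : ∀ x y z, g (B x y) z + g (B y z) x + g (B z x) y = 0)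
    (htr : ∀ x, LinearMap.trace K V (B x) = 0) :
    ∑ i, B (b i) (dualFrame b ginv i) = 0 := by
  refine hginv.separatingLeft g_symm _ fun v => ?_
  have hcomm := sum_apply_basis_dualFrame_comm hginv g_symm B
  have hW : ∑ i, (g (B (b i) (dualFrame b ginv i)) v + g (B (dualFrame b ginv i) v) (b i)
      + g (B v (b i)) (dualFrame b ginv i)) = 0 := sum_eq_zero fun i _ => W3 _ _ _
  simp only [sum_add_distrib, F_symm _ v, g_symm (B v _), ← trace_eq_sum_apply_dualFrame hginv,
    htr, ← map_sum, ← LinearMap.sum_apply, ← hcomm] at hW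
  linear_combination hW / 2

-- The coefficients of `x²y²`, `xzy²` and `xzyu` in the quartic `x ↦ g(B(x, x), B(x, x))`.
lemma quartic_polarize_xxyy (g_symm : ∀ x y, g x y = g y x)
    (hiso : ∀ x, g (B x x) (B x x) = 0) (x y : V) :
    g ((B + B.flip) x y) ((B + B.flip) x y) + 2 * g (B x x) (B y y) = 0 := by
  have hp := hiso (x + y)
  have hm := hiso (x - y)
  simp only [map_add, map_sub, LinearMap.add_apply, LinearMap.sub_apply, LinearMap.flip_apply]
    at hp hm ⊢
  linear_combination (hp + hm) / 2 - hiso x - hiso y - g_symm (B y y) (B x x)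

lemma quartic_polarize_xzyy (g_symm : ∀ x y, g x y = g y x)
    (hiso : ∀ x, g (B x x) (B x x) = 0) (x z y : V) :
    g ((B + B.flip) x y) ((B + B.flip) z y) + g ((B + B.flip) x z) (B y y) = 0 := by
  have hxz := quartic_polarize_xxyy g_symm hiso (x + z) y
  have hx := quartic_polarize_xxyy g_symm hiso x y
  have hz := quartic_polarize_xxyy g_symm hiso z y
  have hsymm := g_symm ((B + B.flip) z y) ((B + B.flip) x y)
  simp only [map_add, LinearMap.add_apply, LinearMap.flip_apply] at hxz hx hz hsymm ⊢
  linear_combination (hxz - hx - hz - hsymm) / 2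

lemma quartic_polarize_xzyu (g_symm : ∀ x y, g x y = g y x)
    (hiso : ∀ x, g (B x x) (B x x) = 0) (x z y u : V) :
    g ((B + B.flip) x y) ((B + B.flip) z u) + g ((B + B.flip) x u) ((B + B.flip) z y)
      + g ((B + B.flip) x z) ((B + B.flip) y u) = 0 := by
  have hyu := quartic_polarize_xzyy g_symm hiso x z (y + u)
  have hy := quartic_polarize_xzyy g_symm hiso x z y
  have hu := quartic_polarize_xzyy g_symm hiso x z u
  simp only [map_add, LinearMap.add_apply, LinearMap.flip_apply] at hyu hy hu ⊢
  linear_combination hyu - hy - hu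

lemma squareNorm_add_twistedSquareNorm_eq_zero (hginv : IsGramInverse g b ginv)
    (g_symm : ∀ x y, g x y = g y x) (hiso : ∀ x, g (B x x) (B x x) = 0)
    (hθ : ∑ i, B (b i) (dualFrame b ginv i) = 0) :
    squareNorm g B b ginv + twistedSquareNorm g B b ginv = 0 := by
  set e := dualFrame b ginv
  set P := B + B.flip
  have hpol : ∑ i, ∑ k, (g (P (b i) (b k)) (P (e i) (e k)) + g (P (b i) (e k)) (P (e i) (b k))
      + g (P (b i) (e i)) (P (b k) (e k))) = 0 :=
    sum_eq_zero fun i _ => sum_eq_zero fun k _ => quartic_polarize_xzyu g_symm hiso _ _ _ _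
  have hswap (i : ι) : ∑ k, g (P (b i) (e k)) (P (e i) (b k))
      = ∑ k, g (P (b i) (b k)) (P (e i) (e k)) :=
    (sum_apply_basis_dualFrame_comm hginv g_symm (g.compl₁₂ (P (b i)) (P (e i)))).symm
  have hP : ∑ i, P (b i) (e i) = 0 := by
    simp only [P, LinearMap.add_apply, LinearMap.flip_apply, sum_add_distrib, hθ, zero_add]
    rw [← sum_apply_basis_dualFrame_comm hginv g_symm B, hθ]
  have hexpand : ∑ i, ∑ k, g (P (b i) (b k)) (P (e i) (e k))
      = 2 * (squareNorm g B b ginv + twistedSquareNorm g B b ginv) := by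
    simp only [P, squareNorm, twistedSquareNorm, LinearMap.add_apply, LinearMap.flip_apply,
      map_add, sum_add_distrib]
    rw [sum_comm (f := fun i k => g (B (b k) (b i)) (B (e i) (e k))),
      sum_comm (f := fun i k => g (B (b k) (b i)) (B (e k) (e i)))]
    ring
  simp only [sum_add_distrib, hswap, ← map_sum, hP, map_zero, add_zero, hexpand] at hpol
  linear_combination hpol / 4

lemma squareNorm_eq_zero (hginv : IsGramInverse g b ginv)
    (g_symm : ∀ x y, g x y = g y x) (F_symm : ∀ x y z, g (B x y) z = g (B x z) y)
    (W3 : ∀ x y z, g (B x y) z + g (B y z) x + g (B z x) y = 0)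
    (hiso : ∀ x, g (B x x) (B x x) = 0) (hθ : ∑ i, B (b i) (dualFrame b ginv i) = 0) :
    squareNorm g B b ginv = 0 := by
  linear_combination 2 * squareNorm_add_twistedSquareNorm_eq_zero hginv g_symm hiso hθ
    - squareNorm_add_two_mul_twistedSquareNorm_eq_zero hginv g_symm F_symm W3

end Field

/-- If on a W₃-manifold `g((∇_x J)x, (∇_x J)x) = 0` for every tangent
vector `x` (at every point), then the square norm
`‖∇J‖² = gⁱʲ gᵏˡ g((∇_{eᵢ}J)eₖ, (∇_{eⱼ}J)eₗ)` vanishes, i.e. the manifold is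
isotropic Kähler. Here `B x y` stands for `(∇_x J)y`, modelled on the tangent space
with a basis `b` and inverse metric components `ginv`. -/
theorem isotropic_vectors_imply_isotropic_Kahler
    {V : Type*} [AddCommGroup V] [Module ℝ V]
    (g : V →ₗ[ℝ] V →ₗ[ℝ] ℝ) (J : V →ₗ[ℝ] V) (B : V →ₗ[ℝ] V →ₗ[ℝ] V)
    {m : ℕ} (b : Module.Basis (Fin m) ℝ V) (ginv : Fin m → Fin m → ℝ)
    (hginv : ∀ i j, (∑ k, ginv i k * g (b k) (b j)) = if i = j then (1:ℝ) else 0)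
    (g_symm : ∀ x y, g x y = g y x)
    (J_sq : ∀ x, J (J x) = -x)
    (norden : ∀ x y, g (J x) (J y) = -(g x y))
    (F_symm : ∀ x y z, g (B x y) z = g (B x z) y)
    (F_hybrid : ∀ x y z, g (B x y) z = g (B x (J y)) (J z))
    (W3 : ∀ x y z, g (B x y) z + g (B y z) x + g (B z x) y = 0)
    (hyp : ∀ x : V, g (B x x) (B x x) = 0) :
    (∑ i, ∑ j, ∑ k, ∑ l, ginv i j * ginv k l * g (B (b i) (b k)) (B (b j) (b l))) = 0 := by
  have htr : ∀ x, LinearMap.trace ℝ V (B x) = 0 :=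
    trace_apply_eq_zero (IsGramInverse.separatingLeft hginv g_symm) J_sq norden F_hybrid
  have hθ := sum_apply_basis_dualFrame_eq_zero hginv g_symm F_symm W3 htr
  rw [sum_ginv_mul_ginv_eq_squareNorm]
  exact squareNorm_eq_zero hginv g_symm F_symm W3 hyp hθ
end

section
/- On a W₃-manifold, the square norm of ∇J satisfies ‖∇J‖² = -2 g^{ij} g^{kl} g((∇_{e_i} J)e_k, (∇_{e_l} J)e_j). -/
/-!
Writing `g` in the basis through the inverse metric reduces everything to the components
`F i k s = g((∇_{eᵢ}J)eₖ, eₛ)`, symmetric in `k, s`, and the identity already holds before the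
`i, j` contraction. Substituting the cyclic relation for the second factor `F j l t` produces two
terms: one is the right-hand side after using the symmetry, the other becomes it after exchanging
the contracted index pairs `(k, l)` and `(s, t)`.
-/

open Finset

theorem sum_comm_pairs {α β γ δ N : Type*} [Fintype α] [Fintype β] [Fintype γ] [Fintype δ]
    [AddCommMonoid N] (f : α → β → γ → δ → N) :
    ∑ k, ∑ l, ∑ s, ∑ t, f k l s t = ∑ s, ∑ t, ∑ k, ∑ l, f k l s t := by
  calc ∑ k, ∑ l, ∑ s, ∑ t, f k l s t = ∑ p : α × β, ∑ q : γ × δ, f p.1 p.2 q.1 q.2 := by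
        simp only [Fintype.sum_prod_type]
    _ = ∑ q : γ × δ, ∑ p : α × β, f p.1 p.2 q.1 q.2 := sum_comm
    _ = _ := by simp only [Fintype.sum_prod_type]

section Contraction

variable {R ι M : Type*} [CommRing R] [AddCommGroup M] [Module R M] [Fintype ι]

section InverseGram

variable [DecidableEq ι] {g : M →ₗ[R] M →ₗ[R] R} {b : Module.Basis ι R M} {A : ι → ι → R}

theorem Module.Basis.sum_mul_apply_basis_eq_repr
    (hA : ∀ i j, ∑ k, A i k * g (b k) (b j) = if i = j then 1 else 0) (s : ι) (v : M) :
    ∑ t, A s t * g (b t) v = b.repr v s := by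
  have : ∑ t, A s t • g (b t) = b.coord s := b.ext fun j => by
    simp [hA, Finsupp.single_apply, eq_comm]
  simpa using LinearMap.congr_fun this v

theorem Module.Basis.apply_eq_sum_sum_mul
    (hA : ∀ i j, ∑ k, A i k * g (b k) (b j) = if i = j then 1 else 0) (u v : M) :
    g u v = ∑ s, ∑ t, A s t * g u (b s) * g (b t) v := by
  calc g u v = ∑ s, g u (b s) * b.repr v s := by
        conv_lhs => rw [← b.sum_repr v]
        simp [-Module.Basis.sum_repr, mul_comm]
    _ = _ := by
        simp only [← b.sum_mul_apply_basis_eq_repr hA, mul_sum]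
        exact sum_congr rfl fun s _ => sum_congr rfl fun t _ => by ring

end InverseGram

theorem contraction_eq_neg_two_mul_of_cyclic {A : ι → ι → R} {F : ι → ι → ι → R}
    (hF : ∀ i k s, F i k s = F i s k) (hW : ∀ i k s, F i k s + F k s i + F s i k = 0)
    (i j : ι) :
    ∑ k, ∑ l, A k l * ∑ s, ∑ t, A s t * F i k s * F j l t =
      -2 * ∑ k, ∑ l, A k l * ∑ s, ∑ t, A s t * F i k s * F l j t := by
  have hcyc : ∀ l t, F j l t = -F l j t - F t j l := fun l t => by
    linear_combination hW j l t - hF l t j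
  have hswap : ∑ k, ∑ l, A k l * ∑ s, ∑ t, A s t * F i k s * F t j l =
      ∑ k, ∑ l, A k l * ∑ s, ∑ t, A s t * F i k s * F l j t := by
    simp only [mul_sum]
    rw [sum_comm_pairs]
    refine sum_congr rfl fun k _ => sum_congr rfl fun l _ =>
      sum_congr rfl fun s _ => sum_congr rfl fun t _ => ?_
    rw [hF i s k]
    ring
  simp only [hcyc, mul_sub, mul_neg, sum_sub_distrib, sum_neg_distrib, hswap]
  ring

end Contraction

theorem norm_nablaJ_trace_identity_general
    {V : Type*} [AddCommGroup V] [Module ℝ V]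
    (g : V →ₗ[ℝ] V →ₗ[ℝ] ℝ) (B : V →ₗ[ℝ] V →ₗ[ℝ] V)
    {m : ℕ} (b : Module.Basis (Fin m) ℝ V) (ginv : Fin m → Fin m → ℝ)
    (hginv : ∀ i j, (∑ k, ginv i k * g (b k) (b j)) = if i = j then (1:ℝ) else 0)
    (g_symm : ∀ x y, g x y = g y x)
    (F_symm : ∀ x y z, g (B x y) z = g (B x z) y)
    (W3 : ∀ x y z, g (B x y) z + g (B y z) x + g (B z x) y = 0) :
    (∑ i, ∑ j, ∑ k, ∑ l, ginv i j * ginv k l * g (B (b i) (b k)) (B (b j) (b l))) =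
      -2 * ∑ i, ∑ j, ∑ k, ∑ l, ginv i j * ginv k l * g (B (b i) (b k)) (B (b l) (b j)) := by
  have expand : ∀ u v, g u v = ∑ s, ∑ t, ginv s t * g u (b s) * g v (b t) := fun u v => by
    simp only [b.apply_eq_sum_sum_mul hginv u v, g_symm (b _) v]
  have contract : ∀ i j, ∑ k, ∑ l, ginv k l * g (B (b i) (b k)) (B (b j) (b l)) =
      -2 * ∑ k, ∑ l, ginv k l * g (B (b i) (b k)) (B (b l) (b j)) := fun i j => by
    simp only [expand (B _ _) (B _ _)]
    exact contraction_eq_neg_two_mul_of_cyclic (F := fun i k s => g (B (b i) (b k)) (b s))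
      (fun i k s => F_symm (b i) (b k) (b s)) (fun i k s => W3 (b i) (b k) (b s)) i j
  simp only [mul_assoc, ← mul_sum, contract, mul_left_comm _ (-2 : ℝ)]

/-- On a W₃-manifold, the square norm of `∇J` satisfies
`‖∇J‖² = -2 gⁱʲ gᵏˡ g((∇_{eᵢ}J)eₖ, (∇_{eₗ}J)eⱼ)`. Here `B x y` stands for `(∇_x J)y`,
modelled on the tangent space with a basis `b` and inverse metric components `ginv`. -/
theorem norm_nablaJ_trace_identity
    {V : Type*} [AddCommGroup V] [Module ℝ V]
    (g : V →ₗ[ℝ] V →ₗ[ℝ] ℝ) (J : V →ₗ[ℝ] V) (B : V →ₗ[ℝ] V →ₗ[ℝ] V)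
    {m : ℕ} (b : Module.Basis (Fin m) ℝ V) (ginv : Fin m → Fin m → ℝ)
    (hginv : ∀ i j, (∑ k, ginv i k * g (b k) (b j)) = if i = j then (1:ℝ) else 0)
    (g_symm : ∀ x y, g x y = g y x)
    (J_sq : ∀ x, J (J x) = -x)
    (norden : ∀ x y, g (J x) (J y) = -(g x y))
    (F_symm : ∀ x y z, g (B x y) z = g (B x z) y)
    (F_hybrid : ∀ x y z, g (B x y) z = g (B x (J y)) (J z))
    (W3 : ∀ x y z, g (B x y) z + g (B y z) x + g (B z x) y = 0) :
    (∑ i, ∑ j, ∑ k, ∑ l, ginv i j * ginv k l * g (B (b i) (b k)) (B (b j) (b l))) =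
      -2 * ∑ i, ∑ j, ∑ k, ∑ l, ginv i j * ginv k l * g (B (b i) (b k)) (B (b l) (b j)) :=
  norm_nablaJ_trace_identity_general g B b ginv hginv g_symm F_symm W3
end

section
/- On a W₃-manifold, ‖∇J‖² = -2(τ + τ**), where τ = g^{ij}g^{kl}R(e_i,e_k,e_l,e_j) is the scalar curvature and τ** = g^{ij}g^{kl}R(e_i,e_k,Je_l,Je_j). -/
/- Algebraic model of an almost complex manifold with Norden metric:
`A` is the ring of smooth functions, `V` the `A`-module of vector fields,
`g` the (Norden) metric, `J` the almost complex structure, `nabla` the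
Levi-Civita connection, `act X f` the derivative of the function `f` in the
direction of the vector field `X`, and `lb` the Lie bracket of vector fields. -/

variable {A V : Type*} [CommRing A] [Algebra ℝ A] [AddCommGroup V] [Module A V]

/-!
Write `F(X,Y,Z) = g((∇_X J)Y, Z)` and take all traces with `gⁱʲ`. Since `F(X,J·,J·) = F(X,·,·)`
and `J` is `g`-self-adjoint, `F` is traceless in its last two slots, and as `∇` is metric the same
holds for `∇F`. The W₃ condition (the cyclic sum of `F` vanishes) then makes `∇F` traceless in its
middle two slots as well. Contracting the Ricci identity
`(∇_X F)(Y,Z,JU) - (∇_Y F)(X,Z,JU) = R(X,Y,JZ,JU) + R(X,Y,Z,U)` over `X ~ U`, `Y ~ Z` therefore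
gives `-∑ gⁱʲ gᵏˡ (∇_{eₖ} F)(eᵢ, eₗ, Jeⱼ) = τ + τ**`. On the other hand the W₃ condition and
`(∇_X F)(Y,JZ,U) + (∇_X F)(Y,Z,JU) = -g((∇_X J)Z, (∇_Y J)U) - g((∇_Y J)Z, (∇_X J)U)`
show that this same contraction equals `‖∇J‖² / 2`.
-/

namespace Norden

omit [Algebra ℝ A]

section MetricTrace

omit [AddCommGroup V] [Module A V]

variable {m : ℕ}

def metricTrace (e : Fin m → V) (ginv : Fin m → Fin m → A) (B : V → V → A) : A :=
  ∑ i, ∑ j, ginv i j * B (e i) (e j)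

variable {e : Fin m → V} {ginv : Fin m → Fin m → A}

theorem metricTrace_flip (hsymm : ∀ i j, ginv i j = ginv j i) (B : V → V → A) :
    metricTrace e ginv (fun x y => B y x) = metricTrace e ginv B := by
  rw [metricTrace, Finset.sum_comm]
  simp only [hsymm, metricTrace]

theorem metricTrace_comm (T : V → V → V → V → A) :
    metricTrace e ginv (fun x y => metricTrace e ginv (fun u v => T x y u v)) =
      metricTrace e ginv (fun u v => metricTrace e ginv (fun x y => T x y u v)) := by
  have h := Finset.sum_comm (s := (Finset.univ : Finset (Fin m × Fin m)))
    (t := (Finset.univ : Finset (Fin m × Fin m)))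
    (f := fun p q => ginv p.1 p.2 * (ginv q.1 q.2 * T (e p.1) (e p.2) (e q.1) (e q.2)))
  simp only [Fintype.sum_prod_type] at h
  simp only [metricTrace, Finset.mul_sum, h, mul_left_comm]

theorem sum_eq_metricTrace_metricTrace (T : V → V → V → V → A) :
    ∑ i, ∑ j, ∑ k, ∑ l, ginv i j * ginv k l * T (e i) (e j) (e k) (e l) =
      metricTrace e ginv (fun x y => metricTrace e ginv (fun u v => T x y u v)) := by
  simp only [metricTrace, Finset.mul_sum, mul_assoc]

theorem metricTrace_zero : metricTrace e ginv (fun _ _ => 0) = 0 := by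
  simp [metricTrace]

theorem metricTrace_add (B C : V → V → A) :
    metricTrace e ginv (fun x y => B x y + C x y) =
      metricTrace e ginv B + metricTrace e ginv C := by
  simp only [metricTrace, mul_add, Finset.sum_add_distrib]

theorem metricTrace_sub (B C : V → V → A) :
    metricTrace e ginv (fun x y => B x y - C x y) =
      metricTrace e ginv B - metricTrace e ginv C := by
  simp only [metricTrace, mul_sub, Finset.sum_sub_distrib]

theorem metricTrace_neg (B : V → V → A) :
    metricTrace e ginv (fun x y => -B x y) = -metricTrace e ginv B := by
  simp only [metricTrace, mul_neg, Finset.sum_neg_distrib]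

theorem metricTrace_mul_left (a : A) (B : V → V → A) :
    metricTrace e ginv (fun x y => a * B x y) = a * metricTrace e ginv B := by
  simp only [metricTrace, Finset.mul_sum]
  exact Finset.sum_congr rfl fun i _ => Finset.sum_congr rfl fun j _ => by ring

end MetricTrace

section Frame

variable {m : ℕ}

theorem _root_.IsLinearMap.map_sum_smul {ι : Type*} [Fintype ι] {f : V → A}
    (hf : IsLinearMap A f) (c : ι → A) (v : ι → V) :
    f (∑ i, c i • v i) = ∑ i, c i * f (v i) := by
  change IsLinearMap.mk' f hf _ = _
  simp [map_sum, IsLinearMap.mk'_apply]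

theorem _root_.IsLinearMap.comp {M N P : Type*} [AddCommMonoid M] [AddCommMonoid N]
    [AddCommMonoid P] [Module A M] [Module A N] [Module A P] {f : N → P} {h : M → N}
    (hf : IsLinearMap A f) (hh : IsLinearMap A h) : IsLinearMap A (fun x => f (h x)) :=
  ((IsLinearMap.mk' f hf).comp (IsLinearMap.mk' h hh)).isLinear

structure IsSymmForm (g : V → V → A) : Prop where
  symm : ∀ x y, g x y = g y x
  add_left : ∀ x y z, g (x + y) z = g x z + g y z
  smul_left : ∀ (a : A) (x y : V), g (a • x) y = a * g x y

theorem IsSymmForm.isLinearMap_left {g : V → V → A} (hg : IsSymmForm g) (y : V) :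
    IsLinearMap A (g · y) :=
  ⟨fun x x' => hg.add_left x x' y, fun a x => hg.smul_left a x y⟩

theorem IsSymmForm.isLinearMap_right {g : V → V → A} (hg : IsSymmForm g) (x : V) :
    IsLinearMap A (g x) := by
  have hgx : g x = (g · x) := funext (hg.symm x)
  exact hgx ▸ hg.isLinearMap_left x

structure IsFrame (g : V → V → A) (e : Fin m → V) (ginv : Fin m → Fin m → A) : Prop where
  span : ∀ v : V, ∃ c : Fin m → A, v = ∑ i, c i • e i
  ginv_mul_gram : ∀ i j, ∑ k, ginv i k * g (e k) (e j) = if i = j then 1 else 0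

def dualFrame (e : Fin m → V) (ginv : Fin m → Fin m → A) (i : Fin m) : V :=
  ∑ j, ginv i j • e j

variable {g : V → V → A} {e : Fin m → V} {ginv : Fin m → Fin m → A}

theorem IsFrame.ginv_symm (hf : IsFrame g e ginv) (hg : IsSymmForm g) (i j : Fin m) :
    ginv i j = ginv j i := by
  classical
  set G : Matrix (Fin m) (Fin m) A := Matrix.of fun i j => g (e i) (e j)
  have hinv : G⁻¹ = Matrix.of ginv := Matrix.inv_eq_left_inv <| by
    ext i j
    simpa [G, Matrix.mul_apply, Matrix.one_apply] using hf.ginv_mul_gram i j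
  have hG : G.IsSymm := Matrix.IsSymm.ext fun i j => hg.symm (e j) (e i)
  simpa [hinv] using hG.inv.apply j i

theorem IsFrame.g_dualFrame (hf : IsFrame g e ginv) (hg : IsSymmForm g) (i j : Fin m) :
    g (dualFrame e ginv i) (e j) = if i = j then 1 else 0 := by
  rw [dualFrame, (hg.isLinearMap_left _).map_sum_smul]
  exact hf.ginv_mul_gram i j

theorem IsFrame.sum_g_dualFrame_smul (hf : IsFrame g e ginv) (hg : IsSymmForm g) (v : V) :
    ∑ i, g v (dualFrame e ginv i) • e i = v := by
  obtain ⟨c, rfl⟩ := hf.span v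
  simp [hg.symm _ (dualFrame e ginv _), (hg.isLinearMap_right _).map_sum_smul,
    hf.g_dualFrame hg]

theorem IsFrame.sum_g_smul_dualFrame (hf : IsFrame g e ginv) (hg : IsSymmForm g) (v : V) :
    ∑ i, g v (e i) • dualFrame e ginv i = v := by
  conv_rhs => rw [← hf.sum_g_dualFrame_smul hg v]
  simp only [dualFrame, Finset.smul_sum, smul_smul, (hg.isLinearMap_right v).map_sum_smul,
    Finset.sum_smul]
  rw [Finset.sum_comm]
  simp only [hf.ginv_symm hg, mul_comm]

theorem IsFrame.sum_apply_dualFrame_of_adjoint (hf : IsFrame g e ginv) (hg : IsSymmForm g)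
    {B : V → V → A} (hB₁ : ∀ y, IsLinearMap A (B · y)) (hB₂ : ∀ x, IsLinearMap A (B x))
    {L M : V → V}
    (hLM : ∀ i j, g (M (dualFrame e ginv i)) (e j) = g (dualFrame e ginv i) (L (e j))) :
    ∑ i, B (e i) (M (dualFrame e ginv i)) = ∑ i, B (L (e i)) (dualFrame e ginv i) := by
  calc ∑ i, B (e i) (M (dualFrame e ginv i))
      = ∑ i, ∑ j, g (M (dualFrame e ginv i)) (e j) * B (e i) (dualFrame e ginv j) := by
        refine Finset.sum_congr rfl fun i _ => ?_
        conv_lhs => rw [← hf.sum_g_smul_dualFrame hg (M _)]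
        exact (hB₂ _).map_sum_smul _ _
    _ = ∑ j, ∑ i, g (L (e j)) (dualFrame e ginv i) * B (e i) (dualFrame e ginv j) := by
        rw [Finset.sum_comm]
        simp only [hLM, hg.symm (dualFrame e ginv _)]
    _ = ∑ j, B (L (e j)) (dualFrame e ginv j) := by
        refine Finset.sum_congr rfl fun j _ => ?_
        conv_rhs => rw [← hf.sum_g_dualFrame_smul hg (L _)]
        exact ((hB₁ _).map_sum_smul _ _).symm

theorem metricTrace_eq_sum_dualFrame {B : V → V → A} (hB : ∀ x, IsLinearMap A (B x)) :
    metricTrace e ginv B = ∑ i, B (e i) (dualFrame e ginv i) := by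
  simp only [metricTrace, dualFrame, (hB _).map_sum_smul]

theorem IsFrame.metricTrace_map_left_eq_map_right (hf : IsFrame g e ginv) (hg : IsSymmForm g)
    {B : V → V → A} (hB₁ : ∀ y, IsLinearMap A (B · y)) (hB₂ : ∀ x, IsLinearMap A (B x))
    {L : V → V} (hL : IsLinearMap A L) (hLg : ∀ x y, g (L x) y = g x (L y)) :
    metricTrace e ginv (fun x y => B (L x) y) = metricTrace e ginv (fun x y => B x (L y)) := by
  rw [metricTrace_eq_sum_dualFrame (fun x => hB₂ (L x)),
    metricTrace_eq_sum_dualFrame (fun x => (hB₂ x).comp hL)]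
  exact (hf.sum_apply_dualFrame_of_adjoint hg hB₁ hB₂ fun _ _ => hLg _ _).symm

end Frame

section Tensors

variable {g : V → V → A} {J : V → V} {nabla : V → V → V} {act : V → A → A}
  {lb : V → V → V}

structure IsNordenMetric (g : V → V → A) (J : V → V) : Prop extends IsSymmForm g where
  J_add : ∀ x y, J (x + y) = J x + J y
  J_smul : ∀ (a : A) (x : V), J (a • x) = a • J x
  J_J : ∀ x, J (J x) = -x
  norden : ∀ x y, g (J x) (J y) = -g x y

structure IsLeviCivita (g : V → V → A) (nabla : V → V → V) (act : V → A → A)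
    (lb : V → V → V) : Prop where
  act_add : ∀ X (a b : A), act X (a + b) = act X a + act X b
  act_mul : ∀ X (a b : A), act X (a * b) = act X a * b + a * act X b
  add_left : ∀ X Y Z, nabla (X + Y) Z = nabla X Z + nabla Y Z
  smul_left : ∀ (a : A) (X Y : V), nabla (a • X) Y = a • nabla X Y
  add_right : ∀ X Y Z, nabla X (Y + Z) = nabla X Y + nabla X Z
  leibniz : ∀ X (a : A) (Y : V), nabla X (a • Y) = act X a • Y + a • nabla X Y
  compat : ∀ X Y Z, act X (g Y Z) = g (nabla X Y) Z + g Y (nabla X Z)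
  torsion_free : ∀ X Y, nabla X Y - nabla Y X = lb X Y

def IsW3 (g : V → V → A) (nabla : V → V → V) (J : V → V) : Prop :=
  ∀ X Y Z, Ften g nabla J X Y Z + Ften g nabla J Y Z X + Ften g nabla J Z X Y = 0

theorem IsNordenMetric.isLinearMap_J (hN : IsNordenMetric g J) : IsLinearMap A J :=
  ⟨hN.J_add, hN.J_smul⟩

theorem IsNordenMetric.g_J_left (hN : IsNordenMetric g J) (x y : V) : g (J x) y = g x (J y) := by
  have h := hN.norden x (J y)
  rwa [hN.J_J, (hN.isLinearMap_right _).map_neg, neg_inj] at h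

theorem IsLeviCivita.act_sum (hLC : IsLeviCivita g nabla act lb) (X : V) {ι : Type*}
    (s : Finset ι) (f : ι → A) : act X (∑ i ∈ s, f i) = ∑ i ∈ s, act X (f i) :=
  map_sum (AddMonoidHom.mk' (act X) (hLC.act_add X)) f s

theorem IsLeviCivita.act_neg (hLC : IsLeviCivita g nabla act lb) (X : V) (a : A) :
    act X (-a) = -act X a :=
  map_neg (AddMonoidHom.mk' (act X) (hLC.act_add X)) a

theorem IsLeviCivita.act_zero (hLC : IsLeviCivita g nabla act lb) (X : V) : act X 0 = 0 :=
  map_zero (AddMonoidHom.mk' (act X) (hLC.act_add X))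

theorem IsLeviCivita.act_ite (hLC : IsLeviCivita g nabla act lb) (X : V) (p : Prop) [Decidable p] :
    act X (if p then 1 else 0) = 0 := by
  split_ifs
  · simpa using hLC.act_mul X 1 1
  · exact hLC.act_zero X

theorem IsLeviCivita.nabla_neg_right (hLC : IsLeviCivita g nabla act lb) (X Y : V) :
    nabla X (-Y) = -nabla X Y :=
  map_neg (AddMonoidHom.mk' (nabla X) (hLC.add_right X)) Y

theorem IsLeviCivita.nabla_sub_right (hLC : IsLeviCivita g nabla act lb) (X Y Z : V) :
    nabla X (Y - Z) = nabla X Y - nabla X Z :=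
  map_sub (AddMonoidHom.mk' (nabla X) (hLC.add_right X)) Y Z

theorem IsLeviCivita.isLinearMap_left (hLC : IsLeviCivita g nabla act lb) (Y : V) :
    IsLinearMap A (nabla · Y) :=
  ⟨fun X X' => hLC.add_left X X' Y, fun a X => hLC.smul_left a X Y⟩

variable (hN : IsNordenMetric g J) (hLC : IsLeviCivita g nabla act lb)
include hN hLC

theorem isLinearMap_covJ (X : V) : IsLinearMap A (covJ nabla J X) where
  map_add Y Y' := by simp only [covJ, hN.J_add, hLC.add_right]; abel
  map_smul a Y := by
    simp only [covJ, hN.J_smul, hLC.leibniz, hN.J_add, smul_sub]; abel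

theorem isLinearMap_covJ_left (Y : V) : IsLinearMap A (covJ nabla J · Y) where
  map_add X X' := by simp only [covJ, hLC.add_left, hN.J_add]; abel
  map_smul a X := by simp only [covJ, hLC.smul_left, hN.J_smul, smul_sub]

theorem covJ_J (X Y : V) : covJ nabla J X (J Y) = -J (covJ nabla J X Y) := by
  simp only [covJ, hN.J_J, hLC.nabla_neg_right, hN.isLinearMap_J.map_sub]; abel

theorem g_covJ_left (X Y Z : V) : g (covJ nabla J X Y) Z = g Y (covJ nabla J X Z) := by
  have h1 := hLC.compat X (J Y) Z
  have h2 := hLC.compat X Y (J Z)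
  rw [hN.g_J_left] at h1
  rw [covJ, covJ, (hN.isLinearMap_left _).map_sub, (hN.isLinearMap_right _).map_sub,
    hN.g_J_left (nabla X Y), ← hN.g_J_left Y (nabla X Z)]
  linear_combination h2 - h1

theorem Ften_comm (X Y Z : V) : Ften g nabla J X Y Z = Ften g nabla J X Z Y := by
  rw [Ften, Ften, g_covJ_left hN hLC, hN.symm]

theorem Ften_J_left (X Y Z : V) : Ften g nabla J X (J Y) Z = -Ften g nabla J X Y (J Z) := by
  rw [Ften, Ften, covJ_J hN hLC, (hN.isLinearMap_left _).map_neg, hN.g_J_left]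

theorem Ften_J_J (X Y Z : V) : Ften g nabla J X (J Y) (J Z) = Ften g nabla J X Y Z := by
  rw [Ften_J_left hN hLC, Ften, hN.J_J, (hN.isLinearMap_right _).map_neg, neg_neg, Ften]

theorem isLinearMap_Ften₁ (Y Z : V) : IsLinearMap A (Ften g nabla J · Y Z) :=
  (hN.isLinearMap_left Z).comp (isLinearMap_covJ_left hN hLC Y)

theorem isLinearMap_Ften₂ (X Z : V) : IsLinearMap A (Ften g nabla J X · Z) :=
  (hN.isLinearMap_left Z).comp (isLinearMap_covJ hN hLC X)

end Tensors

section CovariantDerivative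

def covDeriv (nabla : V → V → V) (act : V → A → A) (W : V) (B : V → V → A) (Y Z : V) :
    A :=
  act W (B Y Z) - B (nabla W Y) Z - B Y (nabla W Z)

variable {g : V → V → A} {J : V → V} {nabla : V → V → V} {act : V → A → A}
  {lb : V → V → V}

theorem isLinearMap_covDeriv (hLC : IsLeviCivita g nabla act lb) {B : V → V → A}
    (hB : ∀ y, IsLinearMap A (B y)) (W Y : V) : IsLinearMap A (covDeriv nabla act W B Y) where
  map_add Z Z' := by simp only [covDeriv, hLC.add_right, (hB _).map_add, hLC.act_add]; ring
  map_smul a Z := by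
    simp only [covDeriv, hLC.leibniz, (hB _).map_add, (hB _).map_smul, hLC.act_mul, smul_eq_mul]
    ring

theorem covF_cyclic (hLC : IsLeviCivita g nabla act lb) (hW3 : IsW3 g nabla J) (W X Y Z : V) :
    covF g nabla J act W X Y Z + covF g nabla J act W Y Z X + covF g nabla J act W Z X Y = 0 := by
  have hact : act W (Ften g nabla J X Y Z) + act W (Ften g nabla J Y Z X)
      + act W (Ften g nabla J Z X Y) = 0 := by
    rw [← hLC.act_add, ← hLC.act_add, hW3 X Y Z, hLC.act_zero]
  unfold covF
  linear_combination hact - hW3 (nabla W X) Y Z - hW3 (nabla W Y) Z X - hW3 (nabla W Z) X Y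

variable (hN : IsNordenMetric g J) (hLC : IsLeviCivita g nabla act lb)
include hN hLC

theorem covF_comm (W X Y Z : V) : covF g nabla J act W X Y Z = covF g nabla J act W X Z Y := by
  rw [covF, covF, Ften_comm hN hLC X Y Z, Ften_comm hN hLC (nabla W X) Y Z,
    Ften_comm hN hLC X (nabla W Y) Z, Ften_comm hN hLC X Y (nabla W Z)]
  ring

theorem isLinearMap_covF₂ (W Y Z : V) : IsLinearMap A (covF g nabla J act W · Y Z) where
  map_add X X' := by
    simp only [covF, hLC.add_right, (isLinearMap_Ften₁ hN hLC _ _).map_add, hLC.act_add]; ring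
  map_smul a X := by
    simp only [covF, hLC.leibniz, (isLinearMap_Ften₁ hN hLC _ _).map_add,
      (isLinearMap_Ften₁ hN hLC _ _).map_smul, hLC.act_mul, smul_eq_mul]
    ring

theorem isLinearMap_covF₃ (W X Z : V) : IsLinearMap A (covF g nabla J act W X · Z) where
  map_add Y Y' := by
    simp only [covF, hLC.add_right, (isLinearMap_Ften₂ hN hLC _ _).map_add, hLC.act_add]; ring
  map_smul a Y := by
    simp only [covF, hLC.leibniz, (isLinearMap_Ften₂ hN hLC _ _).map_add,
      (isLinearMap_Ften₂ hN hLC _ _).map_smul, hLC.act_mul, smul_eq_mul]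
    ring

theorem isLinearMap_covF₄ (W X Y : V) : IsLinearMap A (covF g nabla J act W X Y) where
  map_add Z Z' := by
    simp only [covF, hLC.add_right, (hN.isLinearMap_right _).map_add, hLC.act_add, Ften]; ring
  map_smul a Z := by
    simp only [covF, hLC.leibniz, (hN.isLinearMap_right _).map_add,
      (hN.isLinearMap_right _).map_smul, hLC.act_mul, smul_eq_mul, Ften]
    ring

theorem covF_sub_covF (X Y Z U : V) :
    covF g nabla J act X Y Z U - covF g nabla J act Y X Z U =
      curv4 g nabla lb X Y (J Z) U - curv4 g nabla lb X Y Z (J U) := by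
  have hsub := fun W => (hN.isLinearMap_left W).map_sub
  have expand : ∀ X Y, covF g nabla J act X Y Z U =
      g (nabla X (nabla Y (J Z))) U - g (nabla X (J (nabla Y Z))) U
        - g (nabla (nabla X Y) (J Z)) U + g (nabla (nabla X Y) Z) (J U)
        - g (nabla Y (J (nabla X Z))) U + g (nabla Y (nabla X Z)) (J U) := by
    intro X Y
    rw [covF, Ften, hLC.compat]
    simp only [Ften, covJ, hLC.nabla_sub_right, hsub, hN.g_J_left]
    ring
  rw [expand X Y, expand Y X, curv4, curv4, curv, curv, ← hLC.torsion_free,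
    (hLC.isLinearMap_left _).map_sub, (hLC.isLinearMap_left _).map_sub]
  simp only [hsub]
  ring

theorem covF_J_add_covF_J (X Y Z U : V) :
    covF g nabla J act X Y (J Z) U + covF g nabla J act X Y Z (J U) =
      -g (covJ nabla J X Z) (covJ nabla J Y U) - g (covJ nabla J Y Z) (covJ nabla J X U) := by
  have h1 : Ften g nabla J Y (nabla X (J Z)) U - Ften g nabla J Y (J (nabla X Z)) U =
      g (covJ nabla J X Z) (covJ nabla J Y U) := by
    rw [← (isLinearMap_Ften₂ hN hLC Y U).map_sub, Ften, g_covJ_left hN hLC]; rfl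
  have h2 : Ften g nabla J Y Z (nabla X (J U)) - Ften g nabla J Y Z (J (nabla X U)) =
      g (covJ nabla J Y Z) (covJ nabla J X U) :=
    ((hN.isLinearMap_right _).map_sub _ _).symm
  have h3 : act X (Ften g nabla J Y (J Z) U) + act X (Ften g nabla J Y Z (J U)) = 0 := by
    rw [Ften_J_left hN hLC, hLC.act_neg, neg_add_cancel]
  unfold covF
  linear_combination h3 - h1 - h2 - Ften_J_left hN hLC (nabla X Y) Z U
    - Ften_J_left hN hLC Y (nabla X Z) U - Ften_J_left hN hLC Y Z (nabla X U)

end CovariantDerivative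

section Traces

variable {m : ℕ} {g : V → V → A} {J : V → V} {nabla : V → V → V} {act : V → A → A}
  {lb : V → V → V} {e : Fin m → V} {ginv : Fin m → Fin m → A}

theorem IsFrame.metricTrace_covDeriv (hf : IsFrame g e ginv) (hg : IsSymmForm g)
    (hLC : IsLeviCivita g nabla act lb) {B : V → V → A}
    (hB₁ : ∀ y, IsLinearMap A (B · y)) (hB₂ : ∀ x, IsLinearMap A (B x)) (W : V) :
    metricTrace e ginv (covDeriv nabla act W B) = act W (metricTrace e ginv B) := by
  -- `g(eⁱ, eⱼ)` is constant, so `∇_W` on the dual frame is adjoint to `-∇_W` on the frame.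
  have hadj : ∀ i j, g (nabla W (dualFrame e ginv i)) (e j) =
      g (dualFrame e ginv i) (-nabla W (e j)) := by
    intro i j
    have h := hLC.compat W (dualFrame e ginv i) (e j)
    rw [hf.g_dualFrame hg, hLC.act_ite] at h
    rw [(hg.isLinearMap_right _).map_neg]
    linear_combination -h
  have hmove := hf.sum_apply_dualFrame_of_adjoint hg hB₁ hB₂ (L := fun x => -nabla W x) hadj
  rw [metricTrace_eq_sum_dualFrame (isLinearMap_covDeriv hLC hB₂ W),
    metricTrace_eq_sum_dualFrame hB₂, hLC.act_sum]
  simp only [covDeriv, Finset.sum_sub_distrib, hmove, (hB₁ _).map_neg, Finset.sum_neg_distrib]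
  ring

variable [IsAddTorsionFree A] (hN : IsNordenMetric g J) (hLC : IsLeviCivita g nabla act lb)
  (hf : IsFrame g e ginv)
include hN hLC hf

theorem metricTrace_Ften_eq_zero (X : V) : metricTrace e ginv (Ften g nabla J X) = 0 := by
  have hslide := hf.metricTrace_map_left_eq_map_right hN.toIsSymmForm
    (B := fun Y Z => Ften g nabla J X Y (J Z)) (fun Z => isLinearMap_Ften₂ hN hLC X (J Z))
    (fun Y => (hN.isLinearMap_right _).comp hN.isLinearMap_J) hN.isLinearMap_J hN.g_J_left
  have hneg : ∀ Y Z, Ften g nabla J X Y (-Z) = -Ften g nabla J X Y Z :=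
    fun Y => (hN.isLinearMap_right _).map_neg
  simp only [Ften_J_J hN hLC, hN.J_J, hneg, metricTrace_neg] at hslide
  exact self_eq_neg.mp hslide

theorem metricTrace_covF₃₄_eq_zero (W X : V) :
    metricTrace e ginv (fun Y Z => covF g nabla J act W X Y Z) = 0 := by
  have hsplit : ∀ Y Z, covF g nabla J act W X Y Z =
      covDeriv nabla act W (Ften g nabla J X) Y Z - Ften g nabla J (nabla W X) Y Z := by
    intro Y Z; unfold covF covDeriv; ring
  simp only [hsplit, metricTrace_sub]
  rw [hf.metricTrace_covDeriv hN.toIsSymmForm hLC (fun Z => isLinearMap_Ften₂ hN hLC X Z)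
    (fun Y => hN.isLinearMap_right _), metricTrace_Ften_eq_zero hN hLC hf,
    metricTrace_Ften_eq_zero hN hLC hf, hLC.act_zero, sub_zero]

theorem metricTrace_covF₂₃_eq_zero (hW3 : IsW3 g nabla J) (W U : V) :
    metricTrace e ginv (fun Y Z => covF g nabla J act W Y Z U) = 0 := by
  have hcyc : metricTrace e ginv (fun Y Z => covF g nabla J act W U Y Z +
      covF g nabla J act W Y Z U + covF g nabla J act W Z U Y) = 0 := by
    simp only [covF_cyclic hLC hW3, metricTrace_zero]
  have hflip : metricTrace e ginv (fun Y Z => covF g nabla J act W Z U Y) =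
      metricTrace e ginv (fun Y Z => covF g nabla J act W Y Z U) := by
    rw [← metricTrace_flip (hf.ginv_symm hN.toIsSymmForm)]
    congr 1; funext Y Z; exact covF_comm hN hLC W Y U Z
  rw [metricTrace_add, metricTrace_add, metricTrace_covF₃₄_eq_zero hN hLC hf, hflip,
    zero_add] at hcyc
  exact self_eq_neg.mp (eq_neg_of_add_eq_zero_left hcyc)

theorem metricTrace_covF₃₄_J (X Y : V) :
    metricTrace e ginv (fun Z U => covF g nabla J act X Y Z (J U)) =
      -metricTrace e ginv (fun Z U => g (covJ nabla J X Z) (covJ nabla J Y U)) := by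
  have hsum := congrArg (metricTrace e ginv) (funext₂ (covF_J_add_covF_J hN hLC X Y))
  have hslide := hf.metricTrace_map_left_eq_map_right hN.toIsSymmForm
    (isLinearMap_covF₃ hN hLC X Y) (isLinearMap_covF₄ hN hLC X Y) hN.isLinearMap_J hN.g_J_left
  have hswap : metricTrace e ginv (fun Z U => g (covJ nabla J Y Z) (covJ nabla J X U)) =
      metricTrace e ginv (fun Z U => g (covJ nabla J X Z) (covJ nabla J Y U)) := by
    rw [← metricTrace_flip (hf.ginv_symm hN.toIsSymmForm)]
    congr 1; funext Z U; exact hN.symm _ _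
  simp only [metricTrace_add, metricTrace_sub, metricTrace_neg, hslide, hswap] at hsum
  set t := metricTrace e ginv (fun Z U => covF g nabla J act X Y Z (J U))
  set N := metricTrace e ginv (fun Z U => g (covJ nabla J X Z) (covJ nabla J Y U))
  have h : t + N = -(t + N) := by linear_combination hsum
  linear_combination self_eq_neg.mp h

theorem two_mul_metricTrace_covF₂₄_J (hW3 : IsW3 g nabla J) (X Y : V) :
    2 * metricTrace e ginv (fun Z U => covF g nabla J act X Z Y (J U)) =
      metricTrace e ginv (fun Z U => g (covJ nabla J X Z) (covJ nabla J Y U)) := by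
  have hcyc : metricTrace e ginv (fun Z U => covF g nabla J act X Z Y (J U) +
      covF g nabla J act X Y (J U) Z + covF g nabla J act X (J U) Z Y) = 0 := by
    simp only [covF_cyclic hLC hW3, metricTrace_zero]
  have h2 : metricTrace e ginv (fun Z U => covF g nabla J act X Y (J U) Z) =
      -metricTrace e ginv (fun Z U => g (covJ nabla J X Z) (covJ nabla J Y U)) := by
    rw [← metricTrace_covF₃₄_J hN hLC hf X Y]
    congr 1; funext Z U; exact covF_comm hN hLC X Y (J U) Z
  have h3 : metricTrace e ginv (fun Z U => covF g nabla J act X (J U) Z Y) =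
      metricTrace e ginv (fun Z U => covF g nabla J act X Z Y (J U)) := by
    calc metricTrace e ginv (fun Z U => covF g nabla J act X (J U) Z Y)
        = metricTrace e ginv (fun Z U => covF g nabla J act X (J Z) Y U) := by
          rw [← metricTrace_flip (hf.ginv_symm hN.toIsSymmForm)]
          congr 1; funext Z U; exact covF_comm hN hLC X (J Z) U Y
      _ = metricTrace e ginv (fun Z U => covF g nabla J act X Z Y (J U)) :=
          hf.metricTrace_map_left_eq_map_right hN.toIsSymmForm (isLinearMap_covF₂ hN hLC X Y)
            (fun Z => isLinearMap_covF₄ hN hLC X Z Y) hN.isLinearMap_J hN.g_J_left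
  rw [metricTrace_add, metricTrace_add, h2, h3] at hcyc
  linear_combination hcyc

theorem metricTrace_metricTrace_covF_J_eq_neg_curv4 (hW3 : IsW3 g nabla J) :
    metricTrace e ginv (fun X Y => metricTrace e ginv (fun Z U => covF g nabla J act Z X U (J Y))) =
      -(metricTrace e ginv (fun X Y => metricTrace e ginv (fun Z U => curv4 g nabla lb X Z U Y)) +
        metricTrace e ginv (fun X Y => metricTrace e ginv (fun Z U =>
          curv4 g nabla lb X Z (J U) (J Y)))) := by
  have hinner : ∀ X Y,
      metricTrace e ginv (fun Z U => covF g nabla J act Z X U (J Y)) =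
        -(metricTrace e ginv (fun Z U => curv4 g nabla lb X Z U Y) +
          metricTrace e ginv (fun Z U => curv4 g nabla lb X Z (J U) (J Y))) := by
    intro X Y
    have hricci : ∀ Z U, covF g nabla J act Z X U (J Y) = covF g nabla J act X Z U (J Y) -
        curv4 g nabla lb X Z (J U) (J Y) - curv4 g nabla lb X Z U Y := by
      intro Z U
      have hneg : curv4 g nabla lb X Z U (-Y) = -curv4 g nabla lb X Z U Y :=
        (hN.isLinearMap_right _).map_neg Y
      have h := covF_sub_covF hN hLC X Z U (J Y)
      rw [hN.J_J, hneg] at h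
      linear_combination -h
    simp only [hricci, metricTrace_sub, metricTrace_covF₂₃_eq_zero hN hLC hf hW3]
    ring
  simp only [hinner, metricTrace_neg, metricTrace_add]

theorem metricTrace_metricTrace_g_covJ_eq_two_mul (hW3 : IsW3 g nabla J) :
    metricTrace e ginv (fun X Y => metricTrace e ginv (fun Z U =>
        g (covJ nabla J X Z) (covJ nabla J Y U))) =
      2 * metricTrace e ginv (fun X Y => metricTrace e ginv (fun Z U =>
        covF g nabla J act Z X U (J Y))) := by
  simp only [← two_mul_metricTrace_covF₂₄_J hN hLC hf hW3, metricTrace_mul_left]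
  rw [metricTrace_comm]

end Traces

end Norden

theorem norm_nablaJ_eq_neg_two_tau_add_tauss_general
    (g : V → V → A) (J : V → V) (nabla : V → V → V)
    (act : V → A → A) (lb : V → V → V)
    (g_symm : ∀ x y, g x y = g y x)
    (g_addl : ∀ x y z, g (x + y) z = g x z + g y z)
    (g_smull : ∀ (a : A) (x y : V), g (a • x) y = a * g x y)
    (J_add : ∀ x y, J (x + y) = J x + J y)
    (J_smul : ∀ (a : A) (x : V), J (a • x) = a • J x)
    (J_sq : ∀ x, J (J x) = -x)
    (norden : ∀ x y, g (J x) (J y) = -(g x y))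
    (act_add : ∀ X (a b : A), act X (a + b) = act X a + act X b)
    (act_mul : ∀ X (a b : A), act X (a * b) = act X a * b + a * act X b)
    (nabla_addl : ∀ X Y Z, nabla (X + Y) Z = nabla X Z + nabla Y Z)
    (nabla_smull : ∀ (a : A) (X Y : V), nabla (a • X) Y = a • nabla X Y)
    (nabla_addr : ∀ X Y Z, nabla X (Y + Z) = nabla X Y + nabla X Z)
    (nabla_leib : ∀ X (a : A) (Y : V), nabla X (a • Y) = act X a • Y + a • nabla X Y)
    (compat : ∀ X Y Z, act X (g Y Z) = g (nabla X Y) Z + g Y (nabla X Z))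
    (torsion_free : ∀ X Y, nabla X Y - nabla Y X = lb X Y)
    {m : ℕ} (e : Fin m → V) (ginv : Fin m → Fin m → A)
    (hspan : ∀ v : V, ∃ c : Fin m → A, v = ∑ i, c i • e i)
    (hginv : ∀ i j, (∑ k, ginv i k * g (e k) (e j)) = if i = j then (1:A) else 0)
    (W3 : ∀ X Y Z, Ften g nabla J X Y Z + Ften g nabla J Y Z X + Ften g nabla J Z X Y = 0) :
    (∑ i, ∑ j, ∑ k, ∑ l, ginv i j * ginv k l *
        g (covJ nabla J (e i) (e k)) (covJ nabla J (e j) (e l))) =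
      -2 * ((∑ i, ∑ j, ∑ k, ∑ l, ginv i j * ginv k l * curv4 g nabla lb (e i) (e k) (e l) (e j))
        + (∑ i, ∑ j, ∑ k, ∑ l, ginv i j * ginv k l * curv4 g nabla lb (e i) (e k) (J (e l)) (J (e j)))) := by
  have : IsAddTorsionFree A := .of_isTorsionFree ℝ A
  have hN : Norden.IsNordenMetric g J := ⟨⟨g_symm, g_addl, g_smull⟩, J_add, J_smul, J_sq, norden⟩
  have hLC : Norden.IsLeviCivita g nabla act lb :=
    ⟨act_add, act_mul, nabla_addl, nabla_smull, nabla_addr, nabla_leib, compat, torsion_free⟩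
  have hf : Norden.IsFrame g e ginv := ⟨hspan, hginv⟩
  rw [Norden.sum_eq_metricTrace_metricTrace fun X Y Z U => g (covJ nabla J X Z) (covJ nabla J Y U),
    Norden.sum_eq_metricTrace_metricTrace fun X Y Z U => curv4 g nabla lb X Z U Y,
    Norden.sum_eq_metricTrace_metricTrace fun X Y Z U => curv4 g nabla lb X Z (J U) (J Y),
    Norden.metricTrace_metricTrace_g_covJ_eq_two_mul hN hLC hf W3,
    Norden.metricTrace_metricTrace_covF_J_eq_neg_curv4 hN hLC hf W3]
  ring

/-- On a W₃-manifold, `‖∇J‖² = -2(τ + τ**)`, where `τ = gⁱʲgᵏˡ R(eᵢ,eₖ,eₗ,eⱼ)` is the scalar curvature and `τ** = gⁱʲgᵏˡ R(eᵢ,eₖ,Jeₗ,Jeⱼ)`. -/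
theorem norm_nablaJ_eq_neg_two_tau_add_tauss
    (g : V → V → A) (J : V → V) (nabla : V → V → V)
    (act : V → A → A) (lb : V → V → V)
    (g_symm : ∀ x y, g x y = g y x)
    (g_addl : ∀ x y z, g (x + y) z = g x z + g y z)
    (g_smull : ∀ (a : A) (x y : V), g (a • x) y = a * g x y)
    (J_add : ∀ x y, J (x + y) = J x + J y)
    (J_smul : ∀ (a : A) (x : V), J (a • x) = a • J x)
    (J_sq : ∀ x, J (J x) = -x)
    (norden : ∀ x y, g (J x) (J y) = -(g x y))
    (act_add : ∀ X (a b : A), act X (a + b) = act X a + act X b)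
    (act_mul : ∀ X (a b : A), act X (a * b) = act X a * b + a * act X b)
    (nabla_addl : ∀ X Y Z, nabla (X + Y) Z = nabla X Z + nabla Y Z)
    (nabla_smull : ∀ (a : A) (X Y : V), nabla (a • X) Y = a • nabla X Y)
    (nabla_addr : ∀ X Y Z, nabla X (Y + Z) = nabla X Y + nabla X Z)
    (nabla_leib : ∀ X (a : A) (Y : V), nabla X (a • Y) = act X a • Y + a • nabla X Y)
    (compat : ∀ X Y Z, act X (g Y Z) = g (nabla X Y) Z + g Y (nabla X Z))
    (torsion_free : ∀ X Y, nabla X Y - nabla Y X = lb X Y)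
    (act_lb : ∀ X Y (a : A), act (lb X Y) a = act X (act Y a) - act Y (act X a))
    {m : ℕ} (e : Fin m → V) (ginv : Fin m → Fin m → A)
    (hspan : ∀ v : V, ∃ c : Fin m → A, v = ∑ i, c i • e i)
    (hginv : ∀ i j, (∑ k, ginv i k * g (e k) (e j)) = if i = j then (1:A) else 0)
    (W3 : ∀ X Y Z, Ften g nabla J X Y Z + Ften g nabla J Y Z X + Ften g nabla J Z X Y = 0) :
    (∑ i, ∑ j, ∑ k, ∑ l, ginv i j * ginv k l *
        g (covJ nabla J (e i) (e k)) (covJ nabla J (e j) (e l))) =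
      -2 * ((∑ i, ∑ j, ∑ k, ∑ l, ginv i j * ginv k l * curv4 g nabla lb (e i) (e k) (e l) (e j))
        + (∑ i, ∑ j, ∑ k, ∑ l, ginv i j * ginv k l * curv4 g nabla lb (e i) (e k) (J (e l)) (J (e j)))) :=
  norm_nablaJ_eq_neg_two_tau_add_tauss_general g J nabla act lb g_symm g_addl g_smull J_add J_smul
    J_sq norden act_add act_mul nabla_addl nabla_smull nabla_addr nabla_leib compat torsion_free e
    ginv hspan hginv W3
end

section
/- For any (0,4)-tensor R on a vector space with complex structure J and Norden metric g, satisfying the Riemann symmetries, the holomorphic bisectional curvature h(x,y) = -R(x,Jx,y,Jy)/(√(g(x,x)²+g(x,Jx)²)·√(g(y,y)²+g(y,Jy)²)) is well defined: it is independent of the choice of bases of the holomorphic 2-planes span{x,Jx} and span{y,Jy}, provided the denominators are nonzero. -/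
/-- For a `(0,4)`-tensor `R` with the Riemann symmetries on a vector
space with complex structure `J` and Norden metric `g`, the holomorphic bisectional
curvature
`h(x,y) = -R(x,Jx,y,Jy) / (√(g(x,x)² + g(x,Jx)²) · √(g(y,y)² + g(y,Jy)²))`
is well defined: it is unchanged when `x` is replaced by `a•x + b•Jx` with
`(a,b) ≠ (0,0)` and `y` by `c•y + d•Jy` with `(c,d) ≠ (0,0)` (so it depends only on
the holomorphic 2-planes `span{x,Jx}` and `span{y,Jy}`), provided the denominators
are nonzero. -/
theorem holomorphic_bisectional_curvature_well_defined
    {V : Type*} [AddCommGroup V] [Module ℝ V]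
    (g : V →ₗ[ℝ] V →ₗ[ℝ] ℝ) (J : V →ₗ[ℝ] V)
    (R : V →ₗ[ℝ] V →ₗ[ℝ] V →ₗ[ℝ] V →ₗ[ℝ] ℝ)
    (g_symm : ∀ x y, g x y = g y x)
    (J_sq : ∀ x, J (J x) = -x)
    (norden : ∀ x y, g (J x) (J y) = -(g x y))
    (R_antisym12 : ∀ x y z u, R x y z u = -(R y x z u))
    (R_antisym34 : ∀ x y z u, R x y z u = -(R x y u z))
    (R_pairsym : ∀ x y z u, R x y z u = R z u x y)
    (x y : V)
    (hx : ¬(g x x = 0 ∧ g x (J x) = 0))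
    (hy : ¬(g y y = 0 ∧ g y (J y) = 0))
    (a b c d : ℝ) (hab : (a, b) ≠ (0, 0)) (hcd : (c, d) ≠ (0, 0)) :
    -(R (a • x + b • J x) (J (a • x + b • J x)) (c • y + d • J y) (J (c • y + d • J y))) /
        (Real.sqrt ((g (a • x + b • J x) (a • x + b • J x))^2 +
            (g (a • x + b • J x) (J (a • x + b • J x)))^2) *
          Real.sqrt ((g (c • y + d • J y) (c • y + d • J y))^2 +
            (g (c • y + d • J y) (J (c • y + d • J y)))^2)) =
      -(R x (J x) y (J y)) /
        (Real.sqrt ((g x x)^2 + (g x (J x))^2) *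
          Real.sqrt ((g y y)^2 + (g y (J y))^2)) := by
  have hab' : a ^ 2 + b ^ 2 ≠ 0 := by
    intro h
    apply hab
    have ha : a = 0 := by nlinarith [sq_nonneg a, sq_nonneg b]
    have hb : b = 0 := by nlinarith [sq_nonneg a, sq_nonneg b]
    simp [ha, hb]
  have hcd' : c ^ 2 + d ^ 2 ≠ 0 := by
    intro h
    apply hcd
    have hc : c = 0 := by nlinarith [sq_nonneg c, sq_nonneg d]
    have hd : d = 0 := by nlinarith [sq_nonneg c, sq_nonneg d]
    simp [hc, hd]
  have hab0 : 0 ≤ a ^ 2 + b ^ 2 := by positivity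
  have hcd0 : 0 ≤ c ^ 2 + d ^ 2 := by positivity
  -- J of the combinations
  have hJx : J (a • x + b • J x) = a • J x - b • x := by
    simp [map_add, map_smul, J_sq x]; module
  have hJy : J (c • y + d • J y) = c • J y - d • y := by
    simp [map_add, map_smul, J_sq y]; module
  -- basic consequences of antisymmetry
  have Rzz : ∀ z u v : V, R z z u v = 0 := by
    intro z u v
    have := R_antisym12 z z u v
    linarith
  have Ruu : ∀ z u v : V, R z u v v = 0 := by
    intro z u v
    have := R_antisym34 z u v v
    linarith
  -- numerator scaling
  have hR1 : ∀ z u : V, R (a • x + b • J x) (J (a • x + b • J x)) z u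
      = (a ^ 2 + b ^ 2) * R x (J x) z u := by
    intro z u
    rw [hJx]
    simp [map_add, map_sub, map_smul, LinearMap.add_apply, LinearMap.sub_apply,
      LinearMap.smul_apply, smul_eq_mul, Rzz, R_antisym12 (J x) x z u]
    ring
  have hR2 : ∀ z u : V, R z u (c • y + d • J y) (J (c • y + d • J y))
      = (c ^ 2 + d ^ 2) * R z u y (J y) := by
    intro z u
    rw [R_pairsym, hJy]
    simp [map_add, map_sub, map_smul, LinearMap.add_apply, LinearMap.sub_apply,
      LinearMap.smul_apply, smul_eq_mul, Rzz, R_antisym12 (J y) y y (J y),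
      R_pairsym y (J y) z u]
    rw [R_antisym12 (J y) y z u]
    linear_combination d ^ 2 * R_pairsym y (J y) z u
  have hnum : R (a • x + b • J x) (J (a • x + b • J x)) (c • y + d • J y) (J (c • y + d • J y))
      = (a ^ 2 + b ^ 2) * ((c ^ 2 + d ^ 2) * R x (J x) y (J y)) := by
    rw [hR1, hR2]
  -- denominator scaling
  have hgx : (g (a • x + b • J x) (a • x + b • J x)) ^ 2 +
      (g (a • x + b • J x) (J (a • x + b • J x))) ^ 2
      = (a ^ 2 + b ^ 2) ^ 2 * ((g x x) ^ 2 + (g x (J x)) ^ 2) := by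
    rw [hJx]
    simp [map_add, map_sub, map_smul, LinearMap.add_apply, LinearMap.sub_apply,
      LinearMap.smul_apply, smul_eq_mul, norden x x, g_symm (J x) x]
    ring
  have hgy : (g (c • y + d • J y) (c • y + d • J y)) ^ 2 +
      (g (c • y + d • J y) (J (c • y + d • J y))) ^ 2
      = (c ^ 2 + d ^ 2) ^ 2 * ((g y y) ^ 2 + (g y (J y)) ^ 2) := by
    rw [hJy]
    simp [map_add, map_sub, map_smul, LinearMap.add_apply, LinearMap.sub_apply,
      LinearMap.smul_apply, smul_eq_mul, norden y y, g_symm (J y) y]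
    ring
  rw [hnum, hgx, hgy]
  rw [Real.sqrt_mul (by positivity) ((g x x) ^ 2 + (g x (J x)) ^ 2),
    Real.sqrt_mul (by positivity) ((g y y) ^ 2 + (g y (J y)) ^ 2),
    Real.sqrt_sq hab0, Real.sqrt_sq hcd0]
  have hK : (a ^ 2 + b ^ 2) * (c ^ 2 + d ^ 2) ≠ 0 := mul_ne_zero hab' hcd'
  rw [show -((a ^ 2 + b ^ 2) * ((c ^ 2 + d ^ 2) * R x (J x) y (J y)))
      = (a ^ 2 + b ^ 2) * (c ^ 2 + d ^ 2) * (-(R x (J x) y (J y))) by ring,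
    show (a ^ 2 + b ^ 2) * Real.sqrt ((g x x) ^ 2 + (g x (J x)) ^ 2) *
        ((c ^ 2 + d ^ 2) * Real.sqrt ((g y y) ^ 2 + (g y (J y)) ^ 2))
      = (a ^ 2 + b ^ 2) * (c ^ 2 + d ^ 2) *
        (Real.sqrt ((g x x) ^ 2 + (g x (J x)) ^ 2) *
          Real.sqrt ((g y y) ^ 2 + (g y (J y)) ^ 2)) by ring,
    mul_div_mul_left _ _ hK]
end
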